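/- Let y > 0, α ∈ [0, 2π), and K ∈ (0, 1). Then the sum of 1/p over all primes p satisfying cos(y·ln p + α) < −K diverges. -/

import Mathlib

/-!
Write `θ_p = y log p + β`. For `t ≠ 0` the prime sum `∑_p p^(-σ-it)` stays bounded as `σ → 1⁺`:
it differs by `O(1)` from `∑_p -log (1 - p^(-σ-it))`, a continuous logarithm of `ζ(σ+it)`, and
`ζ` is continuous and nonvanishing on the closed half-plane `Re s ≥ 1` away from `s = 1`.
Hence for a trigonometric polynomial `T`, `∑_p T(θ_p) p^(-σ)` is `O(1)` plus the mean of `T`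
times `∑_p p^(-σ)`, which tends to `∞`. The polynomial `T(θ) = (K - cos θ) |∑_{j<N} e^{ijθ}|²` is
nonnegative where `cos θ ≤ K`, bounded below, and has mean `K N - (N - 1) < 0` for large `N`.
So if `∑ 1/p` over the primes with `cos θ_p > K` converged, the weighted sum would be bounded
below, yet it tends to `-∞`. The case `cos θ_p < -K` is the shift `β = α + π`.
-/

open Real Filter Topology Asymptotics Finset

noncomputable def primeZeta (s : ℂ) : ℂ := ∑' p : Nat.Primes, (p : ℂ) ^ (-s)

noncomputable def eulerLog (s : ℂ) : ℂ := ∑' p : Nat.Primes, -Complex.log (1 - (p : ℂ) ^ (-s))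

namespace Nat.Primes

lemma norm_cpow_neg (p : Nat.Primes) (s : ℂ) : ‖(p : ℂ) ^ (-s)‖ = (p : ℝ) ^ (-s.re) := by
  rw [Complex.norm_natCast_cpow_of_pos p.prop.pos, Complex.neg_re]

lemma rpow_neg_le_rpow_neg (p : Nat.Primes) {a b : ℝ} (h : a ≤ b) :
    (p : ℝ) ^ (-b) ≤ (p : ℝ) ^ (-a) :=
  Real.rpow_le_rpow_of_exponent_le (mod_cast p.prop.one_lt.le) (neg_le_neg h)

lemma rpow_neg_le_half (p : Nat.Primes) {a : ℝ} (h : 1 ≤ a) : (p : ℝ) ^ (-a) ≤ 1 / 2 :=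
  calc (p : ℝ) ^ (-a) ≤ (p : ℝ) ^ (-1 : ℝ) := p.rpow_neg_le_rpow_neg h
    _ = (p : ℝ)⁻¹ := Real.rpow_neg_one _
    _ ≤ 1 / 2 := by rw [one_div]; exact inv_anti₀ two_pos (mod_cast p.prop.two_le)

lemma summable_rpow_neg {a : ℝ} (h : 1 < a) : Summable (fun p : Nat.Primes => (p : ℝ) ^ (-a)) :=
  Nat.Primes.summable_rpow.mpr (by linarith)

lemma summable_cpow_neg {s : ℂ} (hs : 1 < s.re) : Summable (fun p : Nat.Primes => (p : ℂ) ^ (-s)) :=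
  .of_norm (by simpa only [norm_cpow_neg] using summable_rpow_neg hs)

end Nat.Primes

lemma tendsto_tsum_prime_rpow_neg :
    Tendsto (fun σ : ℝ => ∑' p : Nat.Primes, (p : ℝ) ^ (-σ)) (𝓝[>] 1) atTop := by
  rw [tendsto_atTop]
  intro D
  obtain ⟨F, hF⟩ : ∃ F : Finset Nat.Primes, D < ∑ p ∈ F, (p : ℝ) ^ (-(1 : ℝ)) := by
    by_contra! h
    refine Nat.Primes.not_summable_one_div (summable_of_sum_le (c := D) (fun p => by positivity)
      fun F => ?_)
    simpa only [Real.rpow_neg_one, one_div] using h F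
  have hcont : Continuous (fun σ : ℝ => ∑ p ∈ F, (p : ℝ) ^ (-σ)) :=
    continuous_finsetSum F fun p _ =>
      (Real.continuous_const_rpow (mod_cast p.prop.ne_zero)).comp continuous_neg
  filter_upwards [nhdsWithin_le_nhds ((hcont.tendsto 1).eventually (lt_mem_nhds hF)),
    self_mem_nhdsWithin] with σ hσ hσ1
  exact hσ.le.trans ((Nat.Primes.summable_rpow_neg hσ1).sum_le_tsum F fun p _ => by positivity)

lemma Complex.norm_log_one_sub_le {z : ℂ} (hz : ‖z‖ ≤ 1 / 2) :
    ‖Complex.log (1 - z)‖ ≤ 3 / 2 * ‖z‖ := by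
  simpa [sub_eq_add_neg] using Complex.norm_log_one_add_half_le_self (z := -z) (by simpa using hz)

lemma Complex.norm_add_log_one_sub_le {z : ℂ} (hz : ‖z‖ ≤ 1 / 2) :
    ‖z + Complex.log (1 - z)‖ ≤ ‖z‖ ^ 2 := by
  have h := Complex.norm_log_one_add_sub_self_le (z := -z) (by rw [norm_neg]; linarith)
  rw [norm_neg, ← sub_eq_add_neg, sub_neg_eq_add, add_comm] at h
  refine h.trans ?_
  have : (1 - ‖z‖)⁻¹ ≤ 2 := by rw [inv_le_comm₀ (by linarith) two_pos]; linarith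
  nlinarith [sq_nonneg ‖z‖]

lemma continuousOn_eulerLog : ContinuousOn eulerLog {s | 1 < s.re} := by
  intro s hs
  obtain ⟨a, ha, has⟩ := exists_between (α := ℝ) hs
  suffices ContinuousOn eulerLog {z : ℂ | a ≤ z.re} from
    (this.continuousAt (Complex.continuous_re.continuousAt.preimage_mem_nhds
      (Ici_mem_nhds has))).continuousWithinAt
  have hsmall {p : Nat.Primes} {z : ℂ} (hz : a ≤ z.re) : ‖(p : ℂ) ^ (-z)‖ ≤ 1 / 2 := by
    rw [Nat.Primes.norm_cpow_neg]; exact p.rpow_neg_le_half (by linarith)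
  refine continuousOn_tsum (u := fun p : Nat.Primes => 3 / 2 * (p : ℝ) ^ (-a)) (fun p => ?_)
    ((Nat.Primes.summable_rpow_neg ha).mul_left _) fun p z hz => ?_
  · refine (continuousOn_const.sub ?_).clog (fun z hz => ?_) |>.neg
    · exact (continuous_neg.const_cpow (.inl (mod_cast p.prop.ne_zero))).continuousOn
    · have h := Complex.mem_slitPlane_of_norm_lt_one (z := -(p : ℂ) ^ (-z))
        (by rw [norm_neg]; linarith [hsmall (p := p) hz])
      simpa [sub_eq_add_neg] using h
  · rw [norm_neg]
    refine (Complex.norm_log_one_sub_le (hsmall hz)).trans ?_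
    rw [Nat.Primes.norm_cpow_neg]
    exact mul_le_mul_of_nonneg_left (p.rpow_neg_le_rpow_neg hz) (by norm_num)

lemma IsPreconnected.eq_of_cexp_eq {α : Type*} [TopologicalSpace α] {S : Set α}
    (hS : IsPreconnected S) {F : α → ℂ} (hF : ContinuousOn F S) {c : ℂ}
    (hc : ∀ x ∈ S, Complex.exp (F x) = c) {x y : α} (hx : x ∈ S) (hy : y ∈ S) : F x = F y := by
  have h2πI : (2 * π * Complex.I : ℂ) ≠ 0 := by simp [Real.pi_ne_zero]
  have hdisc : IsDiscrete (Set.range fun n : ℤ => ((n : ℝ) : ℂ)) :=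
    (Complex.isometry_ofReal.isEmbedding.comp
      Int.isClosedEmbedding_coe_real.isEmbedding).isInducing.isDiscrete_range
  have hmaps : Set.MapsTo (fun z => (F z - F y) / (2 * π * Complex.I)) S
      (Set.range fun n : ℤ => ((n : ℝ) : ℂ)) := by
    intro z hz
    obtain ⟨n, hn⟩ := Complex.exp_eq_exp_iff_exists_int.mp ((hc z hz).trans (hc y hy).symm)
    refine ⟨n, ?_⟩
    simp only [hn, add_sub_cancel_left, mul_div_cancel_right₀ _ h2πI, Complex.ofReal_intCast]
  have h := hS.constant_of_mapsTo hdisc ((hF.sub continuousOn_const).div_const _) hmaps hx hy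
  simpa [sub_eq_zero, h2πI] using h

lemma isBigO_one_of_cexp_eq {f g : ℝ → ℂ} {a b : ℝ} (hab : a < b)
    (hf : ContinuousOn f (Set.Ioo a b)) (hg : ContinuousOn g (Set.Ico a b))
    (hfg : ∀ x ∈ Set.Ioo a b, Complex.exp (f x) = g x) (ha : g a ≠ 0) :
    f =O[𝓝[>] a] (fun _ => (1 : ℝ)) := by
  have hlim : Tendsto (fun x => g x / g a) (𝓝[≥] a) (𝓝 1) := by
    have h := ((hg a ⟨le_rfl, hab⟩).mono_of_mem_nhdsWithin (Ico_mem_nhdsGE hab)).div_const (g a)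
    rwa [ContinuousWithinAt, div_self ha] at h
  obtain ⟨c, hac, hc⟩ := mem_nhdsGE_iff_exists_Ico_subset.mp
    ((hlim.eventually (Complex.isOpen_slitPlane.mem_nhds Complex.one_mem_slitPlane)).and
      (Ico_mem_nhdsGE hab))
  have hc' (x : ℝ) (hx : x ∈ Set.Ioo a c) : x ∈ Set.Ioo a b ∧ g x / g a ∈ Complex.slitPlane :=
    have h := hc (Set.Ioo_subset_Ico_self hx)
    ⟨⟨hx.1, h.2.2⟩, h.1⟩
  -- near `a`, `f` differs by a constant from the principal logarithm of `g / g a`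
  set F := fun x => f x - Complex.log (g x / g a)
  have hF : ContinuousOn F (Set.Ioo a c) :=
    (hf.mono fun x hx => (hc' x hx).1).sub <|
      (((hg.mono Set.Ioo_subset_Ico_self).div_const _).mono fun x hx => (hc' x hx).1).clog
        fun x hx => (hc' x hx).2
  have hexpF (x : ℝ) (hx : x ∈ Set.Ioo a c) : Complex.exp (F x) = g a := by
    obtain ⟨hxb, hslit⟩ := hc' x hx
    have hgx : g x ≠ 0 := left_ne_zero_of_mul (Complex.slitPlane_ne_zero hslit)
    simp only [F, Complex.exp_sub, hfg x hxb, Complex.exp_log (Complex.slitPlane_ne_zero hslit)]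
    field_simp
  have hx₀ : (a + c) / 2 ∈ Set.Ioo a c := ⟨by linarith [hac.out], by linarith [hac.out]⟩
  have hlog : Tendsto (fun x => Complex.log (g x / g a)) (𝓝[>] a) (𝓝 0) := by
    have h := (continuousAt_clog Complex.one_mem_slitPlane).tendsto.comp
      (hlim.mono_left (nhdsWithin_mono _ Set.Ioi_subset_Ici_self))
    rwa [Complex.log_one] at h
  refine ((tendsto_const_nhds (x := F ((a + c) / 2))).add hlog).isBigO_one ℝ |>.congr' ?_ .rfl
  filter_upwards [Ioo_mem_nhdsGT hac] with x hx
  simp [← isPreconnected_Ioo.eq_of_cexp_eq hF hexpF hx hx₀, F]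

lemma eulerLog_isBigO_one {t : ℝ} (ht : t ≠ 0) :
    (fun σ : ℝ => eulerLog (σ + t * Complex.I)) =O[𝓝[>] 1] (fun _ => (1 : ℝ)) := by
  have hline : Continuous (fun σ : ℝ => (σ : ℂ) + t * Complex.I) := by fun_prop
  refine isBigO_one_of_cexp_eq one_lt_two
    (continuousOn_eulerLog.comp hline.continuousOn fun σ hσ => by simpa using hσ.1)
    (fun σ _ => ?_) (fun σ hσ => riemannZeta_eulerProduct_exp_log (by simpa using hσ.1))
    (riemannZeta_ne_zero_of_one_le_re (by simp))
  have hne : (σ : ℂ) + t * Complex.I ≠ 1 := fun h => ht (by simpa using congrArg Complex.im h)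
  exact ((differentiableAt_riemannZeta hne).continuousAt.comp
    (f := fun σ : ℝ => (σ : ℂ) + t * Complex.I) hline.continuousAt).continuousWithinAt

lemma norm_primeZeta_sub_eulerLog_le {s : ℂ} (hs : 1 < s.re) :
    ‖primeZeta s - eulerLog s‖ ≤ ∑' p : Nat.Primes, (p : ℝ) ^ (-2 : ℝ) := by
  have hsum := Nat.Primes.summable_cpow_neg hs
  rw [primeZeta, eulerLog, ← hsum.tsum_sub hsum.clog_one_sub.neg]
  refine tsum_of_norm_bounded (Nat.Primes.summable_rpow_neg one_lt_two).hasSum fun p => ?_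
  have hp : ‖(p : ℂ) ^ (-s)‖ ≤ 1 / 2 := by
    rw [Nat.Primes.norm_cpow_neg]; exact p.rpow_neg_le_half hs.le
  rw [sub_neg_eq_add]
  calc ‖(p : ℂ) ^ (-s) + Complex.log (1 - (p : ℂ) ^ (-s))‖ ≤ ‖(p : ℂ) ^ (-s)‖ ^ 2 :=
        Complex.norm_add_log_one_sub_le hp
    _ = (p : ℝ) ^ (-(2 * s.re)) := by
        rw [Nat.Primes.norm_cpow_neg, ← Real.rpow_natCast, ← Real.rpow_mul (by positivity)]
        push_cast; ring_nf
    _ ≤ (p : ℝ) ^ (-2 : ℝ) := p.rpow_neg_le_rpow_neg (by linarith)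

lemma primeZeta_isBigO_one {t : ℝ} (ht : t ≠ 0) :
    (fun σ : ℝ => primeZeta (σ + t * Complex.I)) =O[𝓝[>] 1] (fun _ => (1 : ℝ)) := by
  have hdiff : (fun σ : ℝ => primeZeta (σ + t * Complex.I) - eulerLog (σ + t * Complex.I))
      =O[𝓝[>] 1] (fun _ => (1 : ℝ)) :=
    (isBigO_one_iff ℝ).mpr <| isBoundedUnder_of_eventually_le <|
      eventually_nhdsWithin_of_forall fun σ hσ =>
        norm_primeZeta_sub_eulerLog_le (by simpa using hσ)
  simpa using hdiff.add (eulerLog_isBigO_one ht)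

section PrimeExpSum

variable (y β : ℝ)

noncomputable def primeExpSum (n : ℤ) (σ : ℝ) : ℂ :=
  ∑' p : Nat.Primes, Complex.exp (n * (y * Real.log p + β) * Complex.I) * ((p : ℝ) ^ (-σ) : ℝ)

lemma exp_mul_rpow_eq_cpow (p : Nat.Primes) (n : ℤ) (σ : ℝ) :
    Complex.exp (n * (y * Real.log p + β) * Complex.I) * ((p : ℝ) ^ (-σ) : ℝ) =
      Complex.exp (n * β * Complex.I) * (p : ℂ) ^ (-((σ : ℂ) - n * y * Complex.I)) := by
  have hp : (p : ℂ) ≠ 0 := mod_cast p.prop.ne_zero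
  rw [Complex.ofReal_cpow (by positivity), Complex.ofReal_natCast,
    Complex.cpow_def_of_ne_zero hp, Complex.cpow_def_of_ne_zero hp, ← Complex.natCast_log,
    ← Complex.exp_add, ← Complex.exp_add]
  congr 1
  push_cast
  ring

lemma primeExpSum_eq (n : ℤ) (σ : ℝ) :
    primeExpSum y β n σ = Complex.exp (n * β * Complex.I) * primeZeta (σ - n * y * Complex.I) := by
  rw [primeExpSum, primeZeta, ← tsum_mul_left]
  exact tsum_congr fun p => exp_mul_rpow_eq_cpow y β p n σ

lemma hasSum_primeExpSum (n : ℤ) {σ : ℝ} (hσ : 1 < σ) :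
    HasSum (fun p : Nat.Primes =>
      Complex.exp (n * (y * Real.log p + β) * Complex.I) * ((p : ℝ) ^ (-σ) : ℝ))
      (primeExpSum y β n σ) := by
  refine Summable.hasSum ?_
  simp_rw [exp_mul_rpow_eq_cpow]
  exact (Nat.Primes.summable_cpow_neg (by simpa using hσ)).mul_left _

lemma primeExpSum_zero (σ : ℝ) : primeExpSum y β 0 σ = ∑' p : Nat.Primes, (p : ℝ) ^ (-σ) := by
  simp [primeExpSum, Complex.ofReal_tsum]

lemma primeExpSum_isBigO_one (hy : y ≠ 0) {n : ℤ} (hn : n ≠ 0) :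
    primeExpSum y β n =O[𝓝[>] 1] (fun _ => (1 : ℝ)) := by
  have h := (primeZeta_isBigO_one (t := -(n * y)) (by simp [hn, hy])).const_mul_left
    (Complex.exp (n * β * Complex.I))
  refine h.congr_left fun σ => ?_
  rw [primeExpSum_eq]
  push_cast
  ring_nf

lemma primeExpSum_sub_isBigO_one (hy : y ≠ 0) (n : ℤ) :
    (fun σ => primeExpSum y β n σ -
      if n = 0 then ((∑' p : Nat.Primes, (p : ℝ) ^ (-σ) : ℝ) : ℂ) else 0)
      =O[𝓝[>] 1] (fun _ => (1 : ℝ)) := by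
  split_ifs with hn
  · subst hn
    simp only [primeExpSum_zero, sub_self]
    exact isBigO_zero _ _
  · simpa using primeExpSum_isBigO_one y β hy hn

end PrimeExpSum

section TiltedFejer

noncomputable def tiltedFejer (K : ℝ) (N : ℕ) (φ : ℝ) : ℝ :=
  (K - Real.cos φ) * ‖∑ j ∈ range N, Complex.exp (j * φ * Complex.I)‖ ^ 2

lemma ofReal_tiltedFejer (K : ℝ) (N : ℕ) (φ : ℝ) :
    (tiltedFejer K N φ : ℂ) = ∑ j ∈ range N, ∑ m ∈ range N,
      (K * Complex.exp (((j - m : ℤ) : ℂ) * φ * Complex.I) -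
        (Complex.exp (((j - m + 1 : ℤ) : ℂ) * φ * Complex.I) +
          Complex.exp (((j - m - 1 : ℤ) : ℂ) * φ * Complex.I)) / 2) := by
  have hconj : (starRingEnd ℂ) (∑ m ∈ range N, Complex.exp (m * φ * Complex.I)) =
      ∑ m ∈ range N, Complex.exp ((-m : ℂ) * φ * Complex.I) := by
    simp only [map_sum, ← Complex.exp_conj, map_mul, Complex.conj_ofReal, Complex.conj_I,
      map_natCast]
    exact sum_congr rfl fun m _ => by ring_nf
  have hcos : Complex.cos φ =
      (Complex.exp ((1 : ℂ) * φ * Complex.I) + Complex.exp ((-1 : ℂ) * φ * Complex.I)) / 2 := by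
    rw [Complex.cos]; ring_nf
  rw [tiltedFejer, Complex.ofReal_mul, ← Complex.normSq_eq_norm_sq, ← Complex.mul_conj, hconj,
    sum_mul_sum, mul_sum]
  refine sum_congr rfl fun j _ => ?_
  rw [mul_sum]
  refine sum_congr rfl fun m _ => ?_
  set u := Complex.exp (j * φ * Complex.I) * Complex.exp ((-m : ℂ) * φ * Complex.I)
  have hexp (d : ℂ) :
      Complex.exp ((j - m + d) * φ * Complex.I) = u * Complex.exp (d * φ * Complex.I) := by
    simp only [u, ← Complex.exp_add]; ring_nf
  have h0 := hexp 0
  have h2 := hexp (-1)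
  simp only [add_zero, zero_mul, Complex.exp_zero, mul_one] at h0
  rw [← sub_eq_add_neg] at h2
  push_cast
  rw [hcos, h0, hexp 1, h2]
  ring

variable {K : ℝ} {N : ℕ} {φ : ℝ}

lemma tiltedFejer_nonneg (h : Real.cos φ ≤ K) : 0 ≤ tiltedFejer K N φ :=
  mul_nonneg (sub_nonneg.mpr h) (sq_nonneg _)

lemma sub_one_mul_sq_le_tiltedFejer (hK : K ≤ 1) : (K - 1) * N ^ 2 ≤ tiltedFejer K N φ := by
  set s := ‖∑ j ∈ range N, Complex.exp (j * φ * Complex.I)‖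
  have hs : s ≤ N := (norm_sum_le _ _).trans_eq (by simp [Complex.norm_exp])
  have h1 : 0 ≤ (1 - Real.cos φ) * s ^ 2 :=
    mul_nonneg (by linarith [Real.cos_le_one φ]) (sq_nonneg s)
  have h2 : 0 ≤ (1 - K) * (N ^ 2 - s ^ 2) :=
    mul_nonneg (by linarith) (sub_nonneg.mpr (pow_le_pow_left₀ (norm_nonneg _) hs 2))
  unfold tiltedFejer
  linarith

end TiltedFejer

lemma sum_range_sum_range_ite_eq_add (N d : ℕ) (r : ℂ) :
    ∑ j ∈ range N, ∑ m ∈ range N, (if j = m + d then r else 0) = (N - d : ℕ) * r := by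
  rw [sum_comm]
  simp only [sum_ite_eq', ← sum_filter, sum_const, nsmul_eq_mul]
  congr 2
  rw [show (range N).filter (fun m => m + d ∈ range N) = range (N - d) by ext; simp; omega,
    card_range]

-- The constant term of `ofReal_tiltedFejer`, with each `exp (n * φ * I)` replaced by `[n = 0] r`.
lemma sum_sum_tiltedFejer_coeff {N : ℕ} (hN : 1 ≤ N) (K : ℝ) (r : ℂ) :
    ∑ j ∈ range N, ∑ m ∈ range N,
      (K * (if (j - m : ℤ) = 0 then r else 0) -
        ((if (j - m + 1 : ℤ) = 0 then r else 0) + (if (j - m - 1 : ℤ) = 0 then r else 0)) / 2) =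
      ((K * N - (N - 1) : ℝ) : ℂ) * r := by
  have h0 (j m : ℕ) : (j - m : ℤ) = 0 ↔ j = m + 0 := by omega
  have h1 (j m : ℕ) : (j - m + 1 : ℤ) = 0 ↔ m = j + 1 := by omega
  have h2 (j m : ℕ) : (j - m - 1 : ℤ) = 0 ↔ j = m + 1 := by omega
  simp only [h0, h1, h2, sum_sub_distrib, sum_add_distrib, ← mul_sum, ← sum_div]
  rw [sum_comm (f := fun j m => if m = j + 1 then r else 0)]
  simp only [sum_range_sum_range_ite_eq_add, Nat.sub_zero, Nat.cast_sub hN]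
  push_cast
  ring

lemma hasSum_tiltedFejer_mul_rpow (y β K : ℝ) (N : ℕ) {σ : ℝ} (hσ : 1 < σ) :
    HasSum (fun p : Nat.Primes =>
      ((tiltedFejer K N (y * Real.log p + β) * (p : ℝ) ^ (-σ) : ℝ) : ℂ))
      (∑ j ∈ range N, ∑ m ∈ range N, (K * primeExpSum y β (j - m) σ -
        (primeExpSum y β (j - m + 1) σ + primeExpSum y β (j - m - 1) σ) / 2)) := by
  set e := fun (n : ℤ) (p : Nat.Primes) =>
    Complex.exp (n * (y * Real.log p + β) * Complex.I) * ((p : ℝ) ^ (-σ) : ℝ)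
  have hA (n : ℤ) : HasSum (e n) (primeExpSum y β n σ) := hasSum_primeExpSum y β n hσ
  have hfun : (fun p : Nat.Primes =>
      ((tiltedFejer K N (y * Real.log p + β) * (p : ℝ) ^ (-σ) : ℝ) : ℂ)) =
      fun p => ∑ j ∈ range N, ∑ m ∈ range N,
        (K * e (j - m) p - (e (j - m + 1) p + e (j - m - 1) p) / 2) := by
    funext p
    rw [Complex.ofReal_mul, ofReal_tiltedFejer, sum_mul]
    refine sum_congr rfl fun j _ => ?_
    rw [sum_mul]
    refine sum_congr rfl fun m _ => ?_
    simp only [e]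
    push_cast
    ring
  rw [hfun]
  exact hasSum_sum fun j _ => hasSum_sum fun m _ =>
    ((hA _).mul_left _).sub (((hA _).add (hA _)).div_const 2)

lemma tsum_tiltedFejer_sub_isBigO_one {y : ℝ} (hy : y ≠ 0) (β K : ℝ) {N : ℕ} (hN : 1 ≤ N) :
    (fun σ : ℝ => ∑' p : Nat.Primes, tiltedFejer K N (y * Real.log p + β) * (p : ℝ) ^ (-σ) -
      (K * N - (N - 1)) * ∑' p : Nat.Primes, (p : ℝ) ^ (-σ)) =O[𝓝[>] 1] (fun _ => (1 : ℝ)) := by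
  set R := fun σ : ℝ => ∑' p : Nat.Primes, (p : ℝ) ^ (-σ)
  set E := fun (n : ℤ) σ => primeExpSum y β n σ - if n = 0 then ((R σ : ℝ) : ℂ) else 0
  have hE (n : ℤ) : E n =O[𝓝[>] 1] (fun _ => (1 : ℝ)) := primeExpSum_sub_isBigO_one y β hy n
  have hsum : (fun σ => ∑ j ∈ range N, ∑ m ∈ range N,
      (K * E (j - m) σ - 2⁻¹ * (E (j - m + 1) σ + E (j - m - 1) σ))) =O[𝓝[>] 1]
      (fun _ => (1 : ℝ)) :=
    .fun_sum fun j _ => .fun_sum fun m _ =>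
      ((hE _).const_mul_left _).sub (((hE _).add (hE _)).const_mul_left _)
  rw [← Complex.isBigO_ofReal_left]
  refine hsum.congr' ?_ .rfl
  filter_upwards [self_mem_nhdsWithin] with σ hσ
  rw [Complex.ofReal_sub, Complex.ofReal_tsum, (hasSum_tiltedFejer_mul_rpow y β K N hσ).tsum_eq,
    Complex.ofReal_mul, ← sum_sum_tiltedFejer_coeff hN K (R σ)]
  simp only [E, ← sum_sub_distrib]
  refine sum_congr rfl fun j _ => sum_congr rfl fun m _ => ?_
  ring

lemma le_tiltedFejer_mul_rpow {y β K : ℝ} (hK : K ≤ 1) (N : ℕ) {σ : ℝ} (hσ : 1 ≤ σ)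
    (p : Nat.Primes) :
    (K - 1) * N ^ 2 * {n : ℕ | n.Prime ∧ K < Real.cos (y * Real.log n + β)}.indicator
      (fun n => 1 / (n : ℝ)) p ≤ tiltedFejer K N (y * Real.log p + β) * (p : ℝ) ^ (-σ) := by
  by_cases h : K < Real.cos (y * Real.log p + β)
  · rw [Set.indicator_of_mem (show (p : ℕ) ∈ {n : ℕ | n.Prime ∧ K < Real.cos (y * Real.log n + β)}
      from ⟨p.prop, h⟩)]
    have hp : (p : ℝ) ^ (-σ) ≤ 1 / (p : ℝ) := by
      rw [one_div, ← Real.rpow_neg_one]; exact p.rpow_neg_le_rpow_neg hσ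
    calc (K - 1) * N ^ 2 * (1 / (p : ℝ)) ≤ (K - 1) * N ^ 2 * (p : ℝ) ^ (-σ) :=
          mul_le_mul_of_nonpos_left hp
            (mul_nonpos_of_nonpos_of_nonneg (by linarith) (by positivity))
      _ ≤ _ := mul_le_mul_of_nonneg_right (sub_one_mul_sq_le_tiltedFejer hK) (by positivity)
  · rw [Set.indicator_of_notMem fun hp => h hp.2, mul_zero]
    exact mul_nonneg (tiltedFejer_nonneg (not_lt.mp h)) (by positivity)

lemma le_tsum_tiltedFejer_mul_rpow {y β K : ℝ} (hK : K ≤ 1) (N : ℕ) {σ : ℝ} (hσ : 1 < σ)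
    (hS : Summable fun p : Nat.Primes =>
      {n : ℕ | n.Prime ∧ K < Real.cos (y * Real.log n + β)}.indicator (fun n => 1 / (n : ℝ)) p) :
    (K - 1) * N ^ 2 * ∑' p : Nat.Primes,
      {n : ℕ | n.Prime ∧ K < Real.cos (y * Real.log n + β)}.indicator (fun n => 1 / (n : ℝ)) p ≤
      ∑' p : Nat.Primes, tiltedFejer K N (y * Real.log p + β) * (p : ℝ) ^ (-σ) := by
  rw [← tsum_mul_left]
  exact (hS.mul_left _).tsum_le_tsum (le_tiltedFejer_mul_rpow hK N hσ.le)
    (Complex.summable_ofReal.mp (hasSum_tiltedFejer_mul_rpow y β K N hσ).summable)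

theorem not_summable_one_div_primes_cos_gt {y : ℝ} (hy : y ≠ 0) (β : ℝ) {K : ℝ} (hK : K < 1) :
    ¬ Summable (fun p : {p : ℕ // p.Prime ∧ K < Real.cos (y * Real.log p + β)} =>
      (1 : ℝ) / p) := by
  intro hsum
  obtain ⟨N, hN⟩ := exists_nat_gt (1 / (1 - K))
  have hN1 : 1 ≤ N := Nat.cast_pos.mp ((one_div_pos.mpr (by linarith)).trans hN)
  have hmean : K * N - (N - 1) < 0 := by
    rw [div_lt_iff₀ (by linarith)] at hN
    linarith
  obtain ⟨M, hM⟩ := (tsum_tiltedFejer_sub_isBigO_one hy β K hN1).bound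
  have hbot : Tendsto (fun σ : ℝ => ∑' p : Nat.Primes,
      tiltedFejer K N (y * Real.log p + β) * (p : ℝ) ^ (-σ)) (𝓝[>] 1) atBot := by
    refine (tendsto_atBot_add_left_of_ge' _ M ?_ (tendsto_tsum_prime_rpow_neg.const_mul_atTop_of_neg
      hmean)).congr fun σ => sub_add_cancel _ _
    filter_upwards [hM] with σ hσ
    rw [norm_one, mul_one, Real.norm_eq_abs] at hσ
    exact (le_abs_self _).trans hσ
  have hS := ((summable_subtype_iff_indicator (f := fun n : ℕ => 1 / (n : ℝ))).mp hsum).subtype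
    Nat.Prime
  obtain ⟨σ, hσ, hσ1⟩ := ((hbot.eventually_lt_atBot _).and self_mem_nhdsWithin).exists
  exact hσ.not_ge (le_tsum_tiltedFejer_mul_rpow hK.le N hσ1 hS)

theorem stmt_5_general (y α K : ℝ) (hy : 0 < y) (hK1 : K < 1) :
    ¬ Summable (fun p : {p : ℕ // p.Prime ∧ Real.cos (y * Real.log p + α) < -K} =>
      (1 : ℝ) / p) := by
  have hcos (p : ℕ) : (p.Prime ∧ Real.cos (y * Real.log p + α) < -K) ↔
      (p.Prime ∧ K < Real.cos (y * Real.log p + (α + π))) := by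
    rw [← add_assoc, Real.cos_add_pi, lt_neg]
  exact fun h => not_summable_one_div_primes_cos_gt hy.ne' (α + π) hK1
    ((Equiv.subtypeEquivRight hcos).symm.summable_iff.mpr h)

theorem stmt_5 (y α K : ℝ) (hy : 0 < y) (hα0 : 0 ≤ α) (hα2 : α < 2 * π)
    (hK0 : 0 < K) (hK1 : K < 1) :
    ¬ Summable (fun p : {p : ℕ // p.Prime ∧ Real.cos (y * Real.log p + α) < -K} =>
      (1 : ℝ) / p) :=
  stmt_5_general y α K hy hK1
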